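/- arXiv:1507.00377 — 10 statements merged into one kernel-verified Lean document; each statement's English description precedes it below -/
import Mathlib

section
/- Let V be a finite-dimensional vector space over a division ring D, let S be a multiplicative semigroup of linear endomorphisms of V having no nontrivial common invariant subspace (and S ≠ {0}), and let T be a nonzero linear endomorphism of V. Then the collection of restrictions {(T∘S)|_R : S ∈ S}, where R = T(V) is the range of T, has no nontrivial common invariant subspace of R (and is not {0}). -/
/-- If `𝒮` is an irreducible semigroup of endomorphisms of a
finite-dimensional vector space `V` over a division ring `D` and `T ≠ 0`,
then the family `{(T ∘ S)|_R : S ∈ 𝒮}` acting on `R = range T` is irreducible. -/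
theorem stmt0 {D V : Type*} [DivisionRing D] [AddCommGroup V] [Module D V]
    [FiniteDimensional D V]
    (𝒮 : Set (Module.End D V))
    (hsemi : ∀ a ∈ 𝒮, ∀ b ∈ 𝒮, a * b ∈ 𝒮)
    (hne : ∃ S ∈ 𝒮, S ≠ 0)
    (hirr : ∀ W : Submodule D V, (∀ S ∈ 𝒮, ∀ x ∈ W, S x ∈ W) → W = ⊥ ∨ W = ⊤)
    (T : Module.End D V) (hT : T ≠ 0) :
    (∃ S ∈ 𝒮, ∃ x ∈ LinearMap.range T, T (S x) ≠ 0) ∧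
    ∀ W : Submodule D V, W ≤ LinearMap.range T →
      (∀ S ∈ 𝒮, ∀ x ∈ W, T (S x) ∈ W) → W = ⊥ ∨ W = LinearMap.range T := by
  classical
  -- The common kernel of 𝒮 is trivial.
  have hK : (⨅ S ∈ 𝒮, LinearMap.ker S) = ⊥ := by
    rcases hirr (⨅ S ∈ 𝒮, LinearMap.ker S) (by
        intro S hS x hx
        simp only [Submodule.mem_iInf, LinearMap.mem_ker] at hx ⊢
        intro S' hS'
        have := hx (S' * S) (hsemi S' hS' S hS)
        simpa [Module.End.mul_apply] using this) with h | h
    · exact h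
    · exfalso
      obtain ⟨S, hS, hS0⟩ := hne
      apply hS0
      ext v
      have hv : v ∈ (⨅ S ∈ 𝒮, LinearMap.ker S) := h ▸ Submodule.mem_top
      simp only [Submodule.mem_iInf, LinearMap.mem_ker] at hv
      simpa using hv S hS
  -- For a nonzero subspace W, the span of all S(W), S ∈ 𝒮, is all of V.
  have hsup : ∀ W : Submodule D V, W ≠ ⊥ → (⨆ S ∈ 𝒮, Submodule.map S W) = ⊤ := by
    intro W hW
    rcases hirr (⨆ S ∈ 𝒮, Submodule.map S W) (by
        intro S hS x hx
        have hle : Submodule.map S (⨆ S' ∈ 𝒮, Submodule.map S' W) ≤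
            ⨆ S' ∈ 𝒮, Submodule.map S' W := by
          rw [Submodule.map_iSup]
          refine iSup_le fun S' => ?_
          rw [Submodule.map_iSup]
          refine iSup_le fun hS' => ?_
          rw [← Submodule.map_comp]
          exact le_iSup₂_of_le (S * S') (hsemi S hS S' hS') (le_of_eq rfl)
        exact hle ⟨x, hx, rfl⟩) with h | h
    · exfalso
      apply hW
      rw [← le_bot_iff, ← hK]
      intro x hx
      simp only [Submodule.mem_iInf, LinearMap.mem_ker]
      intro S hS
      have : S x ∈ (⨆ S ∈ 𝒮, Submodule.map S W) :=
        (le_iSup₂ (f := fun (S : Module.End D V) (_ : S ∈ 𝒮) => Submodule.map S W) S hS)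
          ⟨x, hx, rfl⟩
      rw [h] at this
      simpa using this
    · exact h
  constructor
  · by_contra hcon
    push_neg at hcon
    have hR : (LinearMap.range T : Submodule D V) ≠ ⊥ := by
      simpa [LinearMap.range_eq_bot] using hT
    have hU := hsup (LinearMap.range T) hR
    -- range T = T '' ⊤ = T '' U ⊆ ⊥, contradiction
    apply hR
    rw [← le_bot_iff]
    rintro y ⟨x, rfl⟩
    have hx : x ∈ (⨆ S ∈ 𝒮, Submodule.map S (LinearMap.range T)) := hU ▸ Submodule.mem_top
    -- show T x = 0 by induction on the sup
    have : T x ∈ Submodule.map T (⨆ S ∈ 𝒮, Submodule.map S (LinearMap.range T)) :=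
      ⟨x, hx, rfl⟩
    rw [Submodule.map_iSup] at this
    have hle : (⨆ S, Submodule.map T (⨆ (_ : S ∈ 𝒮), Submodule.map S (LinearMap.range T)))
        ≤ ⊥ := by
      refine iSup_le fun S => ?_
      rw [Submodule.map_iSup]
      refine iSup_le fun hS => ?_
      rintro z ⟨w, hw, rfl⟩
      obtain ⟨v, hv, rfl⟩ := hw
      simpa using hcon S hS v hv
    exact hle this
  · intro W hWle hWinv
    by_cases hW : W = ⊥
    · exact Or.inl hW
    right
    refine le_antisymm hWle ?_
    have hU := hsup W hW
    rintro y ⟨x, rfl⟩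
    have hx : x ∈ (⨆ S ∈ 𝒮, Submodule.map S W) := hU ▸ Submodule.mem_top
    have : T x ∈ Submodule.map T (⨆ S ∈ 𝒮, Submodule.map S W) := ⟨x, hx, rfl⟩
    rw [Submodule.map_iSup] at this
    have hle : (⨆ S, Submodule.map T (⨆ (_ : S ∈ 𝒮), Submodule.map S W)) ≤ W := by
      refine iSup_le fun S => ?_
      rw [Submodule.map_iSup]
      refine iSup_le fun hS => ?_
      rintro z ⟨w, hw, rfl⟩
      obtain ⟨v, hv, rfl⟩ := hw
      exact hWinv S hS v hv
    exact hle this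
end

section
/- Let F be a field, n ≥ 1, and A ∈ M_n(F) a matrix whose characteristic polynomial is irreducible over F. Then the commutant of A equals F[A] = {f(A) : f ∈ F[X], deg f ≤ n−1}; in particular the commutant of A is a field. -/
/-!
Let `χ` be the (irreducible) characteristic polynomial of `A`. For a polynomial `q` not divisible
by `χ`, a Bézout relation `u χ + w q = 1` evaluated at `A` shows that `q(A)` is invertible; in
particular `q(A) v ≠ 0` for every `v ≠ 0` and `deg q < n`. So `q ↦ q(A) v` is an injective, hence
bijective, linear map from polynomials of degree `< n` onto `Fⁿ`: every nonzero vector is cyclic.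
If `B` commutes with `A` and `B v = p(A) v`, then `B` and `p(A)` agree on every `q(A) v`, i.e.
everywhere.
-/

open Polynomial

namespace Polynomial

theorem isUnit_aeval_of_isCoprime {R A : Type*} [CommSemiring R] [Semiring A] [Algebra R A]
    {a : A} {p q : R[X]} (hpq : IsCoprime p q) (hp : aeval a p = 0) : IsUnit (aeval a q) := by
  obtain ⟨u, w, huw⟩ := hpq
  have hwq : aeval a w * aeval a q = 1 := by
    simpa [hp] using congrArg (aeval a) huw
  have hqw : aeval a q * aeval a w = 1 := by
    rwa [← ((Commute.all w q).map (aeval a)).eq]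
  exact ⟨⟨aeval a q, aeval a w, hqw, hwq⟩, rfl⟩

theorem isUnit_aeval_of_natDegree_lt {F A : Type*} [Field F] [Semiring A] [Algebra F A]
    {a : A} {p q : F[X]} (hp : Irreducible p) (ha : aeval a p = 0) (hq0 : q ≠ 0)
    (hq : q.natDegree < p.natDegree) : IsUnit (aeval a q) :=
  isUnit_aeval_of_isCoprime
    (hp.coprime_iff_not_dvd.2 fun hdvd => (natDegree_le_of_dvd hdvd hq0).not_gt hq) ha

end Polynomial

namespace Matrix

variable {ι : Type*} [Fintype ι] [DecidableEq ι]

theorem eq_aeval_of_commute_of_mulVec_eq {R : Type*} [CommRing R] {A B : Matrix ι ι R}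
    {v : ι → R} {p : R[X]} (hAB : Commute A B) (hv : ∀ x, ∃ q : R[X], x = aeval A q *ᵥ v)
    (hBv : B *ᵥ v = aeval A p *ᵥ v) : B = aeval A p := by
  refine ext_iff_mulVec.2 fun x => ?_
  obtain ⟨q, rfl⟩ := hv x
  have hBq : Commute B (aeval A q) :=
    Algebra.commute_of_mem_adjoin_singleton_of_commute (aeval_mem_adjoin_singleton R A) hAB.symm
  calc B *ᵥ (aeval A q *ᵥ v) = aeval A q *ᵥ (aeval A p *ᵥ v) := by
        rw [mulVec_mulVec, hBq.eq, ← mulVec_mulVec, hBv]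
    _ = aeval A p *ᵥ (aeval A q *ᵥ v) := by
        rw [mulVec_mulVec, mulVec_mulVec, ← map_mul, ← map_mul, mul_comm]

variable {F : Type*} [Field F] {A : Matrix ι ι F}

theorem exists_natDegree_lt_aeval_mulVec_eq (hA : Irreducible A.charpoly) {v : ι → F} (hv : v ≠ 0)
    (x : ι → F) :
    ∃ q : F[X], q.natDegree < Fintype.card ι ∧ x = aeval A q *ᵥ v := by
  let orbit : degreeLT F (Fintype.card ι) →ₗ[F] ι → F :=
    LinearMap.applyₗ v ∘ₗ toLin'.toLinearMap ∘ₗ (aeval A).toLinearMap ∘ₗ (degreeLT F _).subtype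
  have horbit (q : degreeLT F (Fintype.card ι)) : orbit q = aeval A (q : F[X]) *ᵥ v := by
    simp [orbit]
  have hinj : Function.Injective orbit := by
    refine (injective_iff_map_eq_zero orbit).2 fun q hq => ?_
    by_contra hq0
    have hunit : IsUnit (aeval A (q : F[X])) := by
      refine isUnit_aeval_of_natDegree_lt hA A.aeval_self_charpoly (by simpa using hq0) ?_
      rw [charpoly_natDegree_eq_dim, natDegree_lt_iff_degree_lt (by simpa using hq0)]
      exact mem_degreeLT.1 q.2
    exact hv (mulVec_injective_of_isUnit hunit (by rw [← horbit, hq, mulVec_zero]))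
  have hfinrank : Module.finrank F (degreeLT F (Fintype.card ι)) = Module.finrank F (ι → F) := by
    simp [(degreeLTEquiv F _).finrank_eq]
  obtain ⟨q, hq⟩ := (LinearMap.injective_iff_surjective_of_finrank_eq_finrank hfinrank).1 hinj x
  refine ⟨q, ?_, hq ▸ horbit q⟩
  rcases eq_or_ne (q : F[X]) 0 with hq0 | hq0
  · obtain ⟨i, -⟩ := Function.ne_iff.1 hv
    simpa [hq0] using Fintype.card_pos_iff.2 ⟨i⟩
  · exact (natDegree_lt_iff_degree_lt hq0).2 (mem_degreeLT.1 q.2)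

theorem exists_natDegree_lt_eq_aeval_of_commute [Nonempty ι] (hA : Irreducible A.charpoly)
    {B : Matrix ι ι F} (hAB : Commute A B) :
    ∃ q : F[X], q.natDegree < Fintype.card ι ∧ B = aeval A q := by
  obtain ⟨q, hq, hBq⟩ := exists_natDegree_lt_aeval_mulVec_eq hA one_ne_zero (B *ᵥ 1)
  refine ⟨q, hq, eq_aeval_of_commute_of_mulVec_eq hAB (fun x => ?_) hBq⟩
  obtain ⟨p, -, hp⟩ := exists_natDegree_lt_aeval_mulVec_eq hA one_ne_zero x
  exact ⟨p, hp⟩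

end Matrix

/-- If the characteristic polynomial of `A ∈ M_n(F)` is irreducible,
then the commutant of `A` equals `F[A] = {f(A) : deg f ≤ n - 1}`, and every
nonzero member of the commutant is invertible (the commutant is a field). -/
theorem stmt5 {F : Type*} [Field F] {n : ℕ} (hn : 1 ≤ n)
    (A : Matrix (Fin n) (Fin n) F) (hA : Irreducible (Matrix.charpoly A)) :
    ({B : Matrix (Fin n) (Fin n) F | A * B = B * A} =
        {M | ∃ f : Polynomial F, f.natDegree ≤ n - 1 ∧ M = Polynomial.aeval A f}) ∧
    (∀ B : Matrix (Fin n) (Fin n) F, A * B = B * A → B ≠ 0 → IsUnit B) := by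
  have : Nonempty (Fin n) := ⟨⟨0, hn⟩⟩
  refine ⟨Set.ext fun M => ⟨fun hM => ?_, ?_⟩, fun B hB hB0 => ?_⟩
  · obtain ⟨q, hq, rfl⟩ := Matrix.exists_natDegree_lt_eq_aeval_of_commute hA hM
    exact ⟨q, by simpa using Nat.le_sub_one_of_lt hq, rfl⟩
  · rintro ⟨f, -, rfl⟩
    exact Algebra.commute_of_mem_adjoin_self (aeval_mem_adjoin_singleton F A)
  · obtain ⟨q, hq, rfl⟩ := Matrix.exists_natDegree_lt_eq_aeval_of_commute hA hB
    refine isUnit_aeval_of_natDegree_lt hA A.aeval_self_charpoly ?_ ?_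
    · rintro rfl
      exact hB0 (map_zero _)
    · simpa [Matrix.charpoly_natDegree_eq_dim] using hq
end

section
/- Let F be a field, n > 1, and A ∈ M_n(F). A has no nontrivial hyperinvariant subspace if and only if the minimal polynomial of A is irreducible over F. -/
/-! If `minpoly f = q * r` is a proper factorization, `ker (q f)` is hyperinvariant, and it is
neither `0` nor everything by minimality of `minpoly f`. If `minpoly f` is irreducible, `V` is a
vector space over the field `K = F[X] ⧸ (minpoly f)`, on which `X` acts as `f`. A `K`-linear map
commutes with `f`, and since any nonzero vector can be sent by a `K`-linear map to any vector, a
hyperinvariant subspace containing a nonzero vector is everything. -/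

open Polynomial

theorem minpoly.isUnit_of_eq_mul_of_aeval_eq_zero {F A : Type*} [Field F] [Ring A] [Algebra F A]
    {x : A} {q r : F[X]} (hqr : minpoly F x = q * r) (hq : q ≠ 0) (hqx : Polynomial.aeval x q = 0) :
    IsUnit r := by
  refine isUnit_of_dvd_one ((mul_dvd_mul_iff_left hq).mp ?_)
  rw [mul_one, ← hqr]
  exact minpoly.dvd F x hqx

namespace Module.End

variable {F V : Type*} [Field F] [AddCommGroup V] [Module F V]

def IsHyperinvariant (f : Module.End F V) (W : Submodule F V) : Prop :=
  ∀ g : Module.End F V, Commute f g → ∀ x ∈ W, g x ∈ W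

theorem isHyperinvariant_ker_aeval (f : Module.End F V) (q : F[X]) :
    f.IsHyperinvariant (LinearMap.ker (aeval f q)) := by
  intro g hfg x hx
  have hgq : Commute g (aeval f q) :=
    Algebra.commute_of_mem_adjoin_singleton_of_commute (aeval_mem_adjoin_singleton F f) hfg.symm
  rw [LinearMap.mem_ker] at hx ⊢
  rw [← mul_apply, ← hgq.eq, mul_apply, hx, map_zero]

theorem exists_commute_apply_eq (f : Module.End F V) (hf : Irreducible (minpoly F f))
    {v : V} (hv : v ≠ 0) (w : V) : ∃ g : Module.End F V, Commute f g ∧ g v = w := by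
  have := Fact.mk hf
  let K := AdjoinRoot (minpoly F f)
  let ψ : K →ₐ[F] Module.End F V := Ideal.Quotient.liftₐ _ (aeval f) fun p hp =>
    minpoly.dvd_iff.mp (Ideal.mem_span_singleton.mp hp)
  let : Module K V := Module.compHom V ψ.toRingHom
  have : IsScalarTower F K V := ⟨fun a k x => by
    change ψ (a • k) x = a • ψ k x
    rw [map_smul, LinearMap.smul_apply]⟩
  have hf_smul : ∀ y : V, f y = AdjoinRoot.root (minpoly F f) • y := fun y =>
    (LinearMap.congr_fun (aeval_X f) y).symm
  obtain ⟨φ, hφ⟩ := Module.Projective.exists_dual_eq_one K hv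
  refine ⟨(φ.smulRight w).restrictScalars F, LinearMap.ext fun x => ?_, by simp [hφ]⟩
  simp only [mul_apply, LinearMap.restrictScalars_apply, hf_smul, map_smul]

theorem eq_bot_or_eq_top_of_isHyperinvariant {f : Module.End F V}
    (hf : Irreducible (minpoly F f)) {W : Submodule F V} (hW : f.IsHyperinvariant W) :
    W = ⊥ ∨ W = ⊤ := by
  refine or_iff_not_imp_left.mpr fun hW_ne => ?_
  obtain ⟨v, hvW, hv⟩ := Submodule.exists_mem_ne_zero_of_ne_bot hW_ne
  refine Submodule.eq_top_iff'.mpr fun w => ?_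
  obtain ⟨g, hfg, rfl⟩ := f.exists_commute_apply_eq hf hv w
  exact hW g hfg v hvW

theorem exists_isHyperinvariant_ne_bot_ne_top [FiniteDimensional F V] [Nontrivial V]
    (f : Module.End F V) (hf : ¬Irreducible (minpoly F f)) :
    ∃ W : Submodule F V, f.IsHyperinvariant W ∧ W ≠ ⊥ ∧ W ≠ ⊤ := by
  obtain ⟨q, r, hqr, hq, hr⟩ : ∃ q r, minpoly F f = q * r ∧ ¬IsUnit q ∧ ¬IsUnit r := by
    simpa [irreducible_iff, minpoly.not_isUnit] using hf
  have ⟨hq0, hr0⟩ := mul_ne_zero_iff.mp (hqr ▸ minpoly.ne_zero (Algebra.IsIntegral.isIntegral f))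
  refine ⟨LinearMap.ker (aeval f q), f.isHyperinvariant_ker_aeval q, fun hbot => hq ?_,
    fun htop => hr ?_⟩
  · refine minpoly.isUnit_of_eq_mul_of_aeval_eq_zero (hqr.trans (mul_comm q r)) hr0 ?_
    ext x
    refine LinearMap.ker_eq_bot'.mp hbot _ ?_
    rw [← mul_apply, ← map_mul, ← hqr, minpoly.aeval, LinearMap.zero_apply]
  · exact minpoly.isUnit_of_eq_mul_of_aeval_eq_zero hqr hq0 (LinearMap.ker_eq_top.mp htop)

theorem irreducible_minpoly_iff_forall_isHyperinvariant [FiniteDimensional F V] [Nontrivial V]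
    (f : Module.End F V) :
    Irreducible (minpoly F f) ↔ ∀ W : Submodule F V, f.IsHyperinvariant W → W = ⊥ ∨ W = ⊤ := by
  refine ⟨fun hf W hW => eq_bot_or_eq_top_of_isHyperinvariant hf hW, fun h => ?_⟩
  by_contra hf
  obtain ⟨W, hW, hbot, htop⟩ := f.exists_isHyperinvariant_ne_bot_ne_top hf
  exact (h W hW).elim hbot htop

end Module.End

theorem Matrix.isHyperinvariant_toLin'_iff {F : Type*} [Field F] {ι : Type*} [Fintype ι]
    [DecidableEq ι] (A : Matrix ι ι F) (W : Submodule F (ι → F)) :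
    Module.End.IsHyperinvariant (Matrix.toLin' A) W ↔
      ∀ B : Matrix ι ι F, A * B = B * A → ∀ x ∈ W, B.mulVec x ∈ W := by
  refine ⟨fun hW B hAB => hW _ (Commute.map hAB Matrix.toLinAlgEquiv'), fun hW g hAg => ?_⟩
  have hgA := hAg.map Matrix.toLinAlgEquiv'.symm
  rw [show Matrix.toLinAlgEquiv'.symm (Matrix.toLin' A) = A from
    Matrix.toLinAlgEquiv'.symm_apply_apply A] at hgA
  simpa [Matrix.toLinAlgEquiv'_symm] using hW (LinearMap.toMatrix' g) hgA

/-- For `n > 1`, a matrix `A ∈ M_n(F)` has no nontrivial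
hyperinvariant subspace iff its minimal polynomial is irreducible over `F`. -/
theorem stmt6 {F : Type*} [Field F] {n : ℕ} (hn : 1 < n)
    (A : Matrix (Fin n) (Fin n) F) :
    (∀ W : Submodule F (Fin n → F),
        (∀ B : Matrix (Fin n) (Fin n) F, A * B = B * A → ∀ x ∈ W, B.mulVec x ∈ W) →
        W = ⊥ ∨ W = ⊤) ↔
      Irreducible (minpoly F A) := by
  have : NeZero n := ⟨by omega⟩
  simp only [← Matrix.isHyperinvariant_toLin'_iff, ← Matrix.minpoly_toLin']
  exact (Module.End.irreducible_minpoly_iff_forall_isHyperinvariant _).symm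
end

section
/- Let F be a field and n > 1. Suppose that the commutant of every irreducible family of matrices in M_n(F) consists of scalar matrices. Then every nonscalar matrix in M_n(F) has a nontrivial hyperinvariant subspace. -/
/-- If the commutant of every irreducible family in `M_n(F)`
consists of scalar matrices, then every nonscalar matrix in `M_n(F)` has a
nontrivial hyperinvariant subspace. -/
theorem stmt8 {F : Type*} [Field F] {n : ℕ} (hn : 1 < n)
    (hyp : ∀ ℱ : Set (Matrix (Fin n) (Fin n) F),
      (∃ A ∈ ℱ, A ≠ 0) →
      (∀ W : Submodule F (Fin n → F),
        (∀ A ∈ ℱ, ∀ x ∈ W, A.mulVec x ∈ W) → W = ⊥ ∨ W = ⊤) →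
      ∀ B : Matrix (Fin n) (Fin n) F, (∀ A ∈ ℱ, A * B = B * A) →
        ∃ c : F, B = c • (1 : Matrix (Fin n) (Fin n) F)) :
    ∀ A : Matrix (Fin n) (Fin n) F,
      (¬ ∃ c : F, A = c • (1 : Matrix (Fin n) (Fin n) F)) →
      ∃ W : Submodule F (Fin n → F), W ≠ ⊥ ∧ W ≠ ⊤ ∧
        ∀ B : Matrix (Fin n) (Fin n) F, A * B = B * A → ∀ x ∈ W, B.mulVec x ∈ W := by
  intro A hA
  by_contra h
  push_neg at h
  -- ℱ = commutant of A
  set ℱ : Set (Matrix (Fin n) (Fin n) F) := {B | A * B = B * A} with hF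
  have hAne : A ≠ 0 := by
    intro h0
    exact hA ⟨0, by simp [h0]⟩
  have hAmem : A ∈ ℱ := rfl
  have hirr : ∀ W : Submodule F (Fin n → F),
      (∀ B ∈ ℱ, ∀ x ∈ W, B.mulVec x ∈ W) → W = ⊥ ∨ W = ⊤ := by
    intro W hW
    by_contra hW'
    push_neg at hW'
    obtain ⟨B, hBcomm, x, hxW, hxnW⟩ := h W hW'.1 hW'.2
    exact hxnW (hW B hBcomm x hxW)
  have := hyp ℱ ⟨A, hAmem, hAne⟩ hirr A (fun B hB => hB.symm)
  exact hA this
end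

section
/- Let F be a field and n > 1 such that for every k > 1 dividing n, every polynomial of degree k over F is reducible (F is k-closed for all divisors k > 1 of n). Then the only irreducible subalgebra of M_n(F) is M_n(F). -/
open Polynomial Module

/-!
Let `S` be the unital algebra generated by `𝒜`, so that `Fⁿ` is a simple `S`-module. By Schur's
lemma its commutant `D` is a division algebra, hence every `ψ ∈ D` has an irreducible minimal
polynomial `μ`, and `Fⁿ` is a vector space over the field `F[X]/(μ)` acting through `ψ`. Thus
`deg μ ∣ n`, and `k`-closedness forces `deg μ = 1`, i.e. `D = F`. The Jacobson density theorem
then gives `S = M_n(F)`. Finally `𝒜` is a nonzero two-sided ideal of `S = 𝒜 + F·1`, and `M_n(F)`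
is simple.
-/

def IsKClosed (F : Type*) [Field F] (k : ℕ) : Prop :=
  ∀ f : F[X], f.natDegree = k → ¬ Irreducible f

section

variable {F V : Type*} [Field F] [AddCommGroup V] [Module F V]

theorem finrank_dvd_finrank_of_algHom {K : Type*} [Field K] [Algebra F K]
    (ρ : K →ₐ[F] End F V) : finrank F K ∣ finrank F V := by
  let _ : Module K V := Module.compHom V ρ.toRingHom
  have : IsScalarTower F K V := ⟨fun c k v => by
    change ρ (c • k) v = c • ρ k v
    rw [map_smul, LinearMap.smul_apply]⟩
  exact ⟨finrank K V, (finrank_mul_finrank F K V).symm⟩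

theorem natDegree_minpoly_dvd_finrank {E : Type*} [Ring E] [Algebra F E] [Module E V]
    [IsScalarTower F E V] {e : E} (he : Irreducible (minpoly F e)) :
    (minpoly F e).natDegree ∣ finrank F V := by
  have : Fact (Irreducible (minpoly F e)) := ⟨he⟩
  let ρ : AdjoinRoot (minpoly F e) →ₐ[F] E :=
    Ideal.Quotient.liftₐ _ (aeval e) fun p hp =>
      minpoly.dvd_iff.mp (Ideal.mem_span_singleton.mp hp)
  have hdim := finrank_dvd_finrank_of_algHom ((Algebra.lsmul F F V).comp ρ)
  rwa [(AdjoinRoot.powerBasis he.ne_zero).finrank, AdjoinRoot.powerBasis_dim] at hdim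

section Simple

variable {R : Type*} [Ring R] [Algebra F R] [Module R V] [IsScalarTower F R V]
  [FiniteDimensional F V] [IsSimpleModule R V]

theorem mem_range_algebraMap_of_isSimpleModule
    (hyp : ∀ k : ℕ, 1 < k → k ∣ finrank F V → IsKClosed F k) (ψ : End R V) :
    ψ ∈ (algebraMap F (End R V)).range := by
  classical
  have hint : IsIntegral F ψ :=
    (isIntegral_algHom_iff (Algebra.lsmul F F V : End R V →ₐ[F] End F V)
      fun _ _ h => LinearMap.ext fun v => congr($h v)).mp (.of_finite F _)
  have hirr := minpoly.irreducible hint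
  rw [← minpoly.natDegree_eq_one_iff]
  by_contra hne
  exact hyp _ (lt_of_le_of_ne hirr.natDegree_pos (Ne.symm hne))
    (natDegree_minpoly_dvd_finrank hirr) _ rfl hirr

theorem lsmul_surjective_of_isSimpleModule
    (hyp : ∀ k : ℕ, 1 < k → k ∣ finrank F V → IsKClosed F k) :
    Function.Surjective (Algebra.lsmul F F V : R →ₐ[F] End F V) := by
  intro g
  have : Module.Finite (End R V) V := .of_restrictScalars_finite F _ V
  let g' : End (End R V) V :=
    { toFun := g
      map_add' := g.map_add
      map_smul' := fun ψ v => by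
        obtain ⟨c, rfl⟩ := mem_range_algebraMap_of_isSimpleModule hyp ψ
        simp }
  obtain ⟨r, hr⟩ := Module.Finite.toModuleEnd_moduleEnd_surjective g'
  exact ⟨r, LinearMap.ext fun v => congr($hr v)⟩

end Simple

variable {A : Type*} [Ring A] [Algebra F A] [Module A V] [IsScalarTower F A V]

theorem isSimpleModule_adjoin_of_forall_invariant [Nontrivial V] {T : Set A}
    (hinv : ∀ W : Submodule F V, (∀ t ∈ T, ∀ x ∈ W, t • x ∈ W) → W = ⊥ ∨ W = ⊤) :
    IsSimpleModule (Algebra.adjoin F T) V where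
  eq_bot_or_eq_top p := by
    have := hinv (p.restrictScalars F) fun t ht x hx => p.smul_mem ⟨t, Algebra.subset_adjoin ht⟩ hx
    simpa only [Submodule.restrictScalars_eq_bot_iff, Submodule.restrictScalars_eq_top_iff]
      using this

theorem adjoin_eq_top_of_forall_invariant [FaithfulSMul A V] [Nontrivial V]
    [FiniteDimensional F V] (hyp : ∀ k : ℕ, 1 < k → k ∣ finrank F V → IsKClosed F k) {T : Set A}
    (hinv : ∀ W : Submodule F V, (∀ t ∈ T, ∀ x ∈ W, t • x ∈ W) → W = ⊥ ∨ W = ⊤) :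
    Algebra.adjoin F T = ⊤ := by
  have := isSimpleModule_adjoin_of_forall_invariant hinv
  refine eq_top_iff.2 fun a _ => ?_
  obtain ⟨s, hs⟩ := lsmul_surjective_of_isSimpleModule (R := Algebra.adjoin F T) hyp
    (Algebra.lsmul F F V a)
  have : (s : A) = a := FaithfulSMul.eq_of_smul_eq_smul fun v => congr($hs v)
  exact this ▸ s.2

end

theorem NonUnitalSubalgebra.eq_top_of_adjoin_eq_top {R A : Type*} [CommRing R] [Ring A]
    [Algebra R A] [IsSimpleRing A] {S : NonUnitalSubalgebra R A} (hS : S ≠ ⊥)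
    (h : Algebra.adjoin R (S : Set A) = ⊤) : S = ⊤ := by
  have hideal (a : A) : ∀ x ∈ S, a * x ∈ S ∧ x * a ∈ S := by
    have ha : a ∈ Algebra.adjoin R (S : Set A) := h ▸ Algebra.mem_top
    induction ha using Algebra.adjoin_induction with
    | mem b hb => exact fun x hx => ⟨mul_mem hb hx, mul_mem hx hb⟩
    | algebraMap r =>
      intro x hx
      rw [← Algebra.commutes, ← Algebra.smul_def]
      exact ⟨S.smul_mem r hx, S.smul_mem r hx⟩
    | add b c _ _ hb hc =>
      intro x hx
      rw [add_mul, mul_add]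
      exact ⟨add_mem (hb x hx).1 (hc x hx).1, add_mem (hb x hx).2 (hc x hx).2⟩
    | mul b c _ _ hb hc =>
      intro x hx
      rw [mul_assoc, ← mul_assoc x]
      exact ⟨(hb _ (hc x hx).1).1, (hc _ (hb x hx).2).2⟩
  let I : TwoSidedIdeal A := .mk' S S.zero_mem add_mem neg_mem
    (fun {a _} hx => (hideal a _ hx).1) (fun {_ a} hx => (hideal a _ hx).2)
  have hI (x : A) : x ∈ I ↔ x ∈ S := TwoSidedIdeal.mem_mk' ..
  rcases eq_bot_or_eq_top I with hbot | htop
  · refine absurd (eq_bot_iff.2 fun x hx => ?_) hS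
    rw [NonUnitalAlgebra.mem_bot, ← TwoSidedIdeal.mem_bot, ← hbot, hI]
    exact hx
  · have h1 : (1 : A) ∈ S := (hI 1).1 (htop ▸ trivial)
    exact eq_top_iff.2 fun a _ => mul_one a ▸ (hideal a 1 h1).1

theorem stmt10_general {F : Type*} [Field F] {n : ℕ}
    (hyp : ∀ k : ℕ, 1 < k → k ∣ n →
      ∀ f : Polynomial F, f.natDegree = k → ¬ Irreducible f) :
    ∀ 𝒜 : NonUnitalSubalgebra F (Matrix (Fin n) (Fin n) F),
      (∃ A ∈ 𝒜, A ≠ 0) →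
      (∀ W : Submodule F (Fin n → F),
        (∀ A ∈ 𝒜, ∀ x ∈ W, A.mulVec x ∈ W) → W = ⊥ ∨ W = ⊤) →
      𝒜 = ⊤ := by
  rintro 𝒜 ⟨A, hA𝒜, hA0⟩ hinv
  have : Nonempty (Fin n) := by
    by_contra h
    exact hA0 (Matrix.ext fun i => (h ⟨i⟩).elim)
  have : FaithfulSMul (Matrix (Fin n) (Fin n) F) (Fin n → F) :=
    ⟨fun h => Matrix.ext_iff_smul.2 h⟩
  have hadj : Algebra.adjoin F (𝒜 : Set (Matrix (Fin n) (Fin n) F)) = ⊤ :=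
    adjoin_eq_top_of_forall_invariant (V := Fin n → F) (by rwa [finrank_fin_fun]) hinv
  refine NonUnitalSubalgebra.eq_top_of_adjoin_eq_top ?_ hadj
  rintro rfl
  exact hA0 (NonUnitalAlgebra.mem_bot.1 hA𝒜)

/-- If `F` is `k`-closed for every divisor `k > 1` of `n` (every
polynomial of degree `k` over `F` is reducible), then the only irreducible
subalgebra of `M_n(F)` is `M_n(F)` itself. -/
theorem stmt10 {F : Type*} [Field F] {n : ℕ} (hn : 1 < n)
    (hyp : ∀ k : ℕ, 1 < k → k ∣ n →
      ∀ f : Polynomial F, f.natDegree = k → ¬ Irreducible f) :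
    ∀ 𝒜 : NonUnitalSubalgebra F (Matrix (Fin n) (Fin n) F),
      (∃ A ∈ 𝒜, A ≠ 0) →
      (∀ W : Submodule F (Fin n → F),
        (∀ A ∈ 𝒜, ∀ x ∈ W, A.mulVec x ∈ W) → W = ⊥ ∨ W = ⊤) →
      𝒜 = ⊤ :=
  stmt10_general hyp
end

section
/- Let F be a field and A a finite-dimensional F-algebra (possibly non-unital) that is spanned, as an F-vector space, by its nilpotent elements. Then A is a nilpotent algebra; more precisely A^n = 0 where n = dim_F(A) + 1 and A^n denotes the set of products of n elements of A. In particular every element of A is nilpotent. (Wedderburn's Theorem.) -/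
/-- `nupow a m = a^(m+1)`, iterated product usable in a non-unital ring. -/
def nupow {A : Type*} [Mul A] (a : A) : ℕ → A
  | 0 => a
  | m + 1 => nupow a m * a

/-- Nilpotency for elements of a non-unital ring: some power `a^(m+1)` is zero. -/
def IsNilpotentNU {A : Type*} [Mul A] [Zero A] (a : A) : Prop :=
  ∃ m : ℕ, nupow a m = 0

/-!
Pass to the unitization `B` of `A`, in which `A` is a left ideal contained in the span of the
nilpotent elements, and extend scalars to an algebraic closure `K`. Such a left ideal kills every
simple module `M`: by Burnside's theorem (Jacobson density plus Schur's lemma) every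
`K`-endomorphism of `M` is the action of some `b`, while every element of the left ideal, in
particular `b * a`, acts with trace zero because nilpotent elements do; taking `b` of rank one
shows that `a` acts by zero. Hence `A` kills each factor of a composition series of the regular
module, which has at most `dim B = dim A + 1` factors.
-/

open Module TensorProduct

section
variable {A M G : Type*} [Mul A] [Monoid M] [FunLike G A M] [MulHomClass G A M]

theorem map_nupow (f : G) (a : A) (m : ℕ) : f (nupow a m) = f a ^ (m + 1) := by
  induction m with
  | zero => simp [nupow]
  | succ m ih => rw [nupow, map_mul, ih, ← pow_succ]

theorem map_foldl_mul (f : G) (x : A) (l : List A) :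
    f (l.foldl (· * ·) x) = ((x :: l).map f).prod := by
  induction l generalizing x with
  | nil => simp
  | cons y l ih => simp [ih, mul_assoc]

end

section
variable {K B M : Type*} [Field K] [Ring B] [Algebra K B]
  [AddCommGroup M] [Module K M] [Module B M] [IsScalarTower K B M]

theorem trace_lsmul_eq_zero_of_mem_span_isNilpotent {b : B}
    (hb : b ∈ Submodule.span K {x : B | IsNilpotent x}) :
    LinearMap.trace K M (Algebra.lsmul K K M b) = 0 := by
  induction hb using Submodule.span_induction with
  | mem x hx => exact (LinearMap.isNilpotent_trace_of_isNilpotent (hx.map _)).eq_zero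
  | zero => simp
  | add x y _ _ hx hy => simp [hx, hy]
  | smul c x _ hx => simp [hx]

variable [IsAlgClosed K] [FiniteDimensional K M]

theorem IsSimpleModule.lsmul_surjective_of_isAlgClosed [IsSimpleModule B M] :
    Function.Surjective (Algebra.lsmul K K M : B →ₐ[K] End K M) := by
  have hschur := IsSimpleModule.algebraMap_end_bijective_of_isAlgClosed (A := B) (V := M) K
  have : Module.Finite (End B M) M := .of_restrictScalars_finite K _ M
  intro g
  let g' : End (End B M) M :=
    { g with
      map_smul' := fun f m => by
        obtain ⟨c, rfl⟩ := hschur.2 f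
        exact g.map_smul c m }
  obtain ⟨b, hb⟩ := Module.Finite.toModuleEnd_moduleEnd_surjective (R := B) (M := M) g'
  exact ⟨b, LinearMap.ext fun m => congr($hb m)⟩

theorem IsSimpleModule.smul_eq_zero_of_mul_mem_span_isNilpotent [IsSimpleModule B M] {a : B}
    (ha : ∀ b : B, b * a ∈ Submodule.span K {x : B | IsNilpotent x}) (m : M) : a • m = 0 := by
  refine (Module.forall_dual_apply_eq_zero_iff K _).mp fun φ => ?_
  obtain ⟨b, hb⟩ := lsmul_surjective_of_isAlgClosed (K := K) (B := B) (φ.smulRight m)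
  have hba : Algebra.lsmul K K M (b * a) = (φ ∘ₗ Algebra.lsmul K K M a).smulRight m := by
    rw [map_mul, hb]; ext; rfl
  calc φ (a • m) = LinearMap.trace K M ((φ ∘ₗ Algebra.lsmul K K M a).smulRight m) := by
        rw [LinearMap.trace_smulRight]; rfl
    _ = 0 := hba ▸ trace_lsmul_eq_zero_of_mem_span_isNilpotent (ha b)

theorem list_prod_smul_eq_zero_of_mul_mem_span_isNilpotent {l : List B}
    (hl : ∀ a ∈ l, ∀ b : B, b * a ∈ Submodule.span K {x : B | IsNilpotent x})
    (hlen : finrank K M ≤ l.length) (m : M) : l.prod • m = 0 := by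
  induction h : finrank K M using Nat.strong_induction_on generalizing M l with
  | _ n ih =>
  rcases subsingleton_or_nontrivial M with _ | _
  · exact Subsingleton.elim _ _
  have : Module.Finite B M := .of_restrictScalars_finite K B M
  obtain ⟨W, hW⟩ := IsCoatomic.exists_coatom (Submodule B M)
  obtain rfl | ⟨l, a, rfl⟩ := l.eq_nil_or_concat'
  · exact absurd hlen (by simpa using finrank_pos.ne')
  have : FiniteDimensional K W := .finiteDimensional_submodule (W.restrictScalars K)
  have : IsSimpleModule B (M ⧸ W) := isSimpleModule_iff_isCoatom.mpr hW
  have haW : a • m ∈ W := by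
    rw [← Submodule.Quotient.mk_eq_zero, Submodule.Quotient.mk_smul]
    exact IsSimpleModule.smul_eq_zero_of_mul_mem_span_isNilpotent (hl a (by simp)) _
  have hWlt : finrank K W < n :=
    h ▸ Submodule.finrank_lt (s := W.restrictScalars K) (by simpa using hW.1)
  have := ih _ hWlt (M := W) (l := l) (fun b hb => hl b (by simp [hb])) ?_ ⟨a • m, haW⟩ rfl
  · rw [List.prod_append, List.prod_singleton, mul_smul]
    simpa using congr(($this : M))
  · simp at hlen; omega

end

theorem list_prod_eq_zero_of_mul_mem_span_isNilpotent {F B : Type*} [Field F] [Ring B]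
    [Algebra F B] [FiniteDimensional F B] {l : List B}
    (hl : ∀ a ∈ l, ∀ b : B, b * a ∈ Submodule.span F {x : B | IsNilpotent x})
    (hlen : finrank F B ≤ l.length) : l.prod = 0 := by
  let K := AlgebraicClosure F
  let ι : B →ₐ[F] K ⊗[F] B := Algebra.TensorProduct.includeRight
  have hι : ∀ a ∈ Submodule.span F {x : B | IsNilpotent x},
      ι a ∈ Submodule.span K {x : K ⊗[F] B | IsNilpotent x} := by
    intro a ha
    induction ha using Submodule.span_induction with
    | mem x hx => exact Submodule.subset_span (hx.map ι)
    | zero => simp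
    | add x y _ _ hx hy => simpa using add_mem hx hy
    | smul c x _ hx => simpa [algebraMap_smul] using Submodule.smul_mem _ (algebraMap F K c) hx
  have hlK : ∀ a ∈ l.map ι, ∀ y : K ⊗[F] B, y * a ∈ Submodule.span K {x | IsNilpotent x} := by
    simp only [List.mem_map, forall_exists_index, and_imp]
    rintro _ a ha rfl y
    induction y using TensorProduct.induction_on with
    | zero => simp
    | tmul k b =>
      rw [show k ⊗ₜ[F] b = k • ι b by simp [ι, TensorProduct.smul_tmul'], smul_mul_assoc,
        ← map_mul]
      exact Submodule.smul_mem _ k (hι _ (hl a ha b))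
    | add y z hy hz => simpa [add_mul] using add_mem hy hz
  have h := list_prod_smul_eq_zero_of_mul_mem_span_isNilpotent (M := K ⊗[F] B) hlK
    (by simpa [Module.finrank_baseChange] using hlen) 1
  rw [smul_eq_mul, mul_one, ← map_list_prod] at h
  exact Algebra.TensorProduct.includeRight_injective (algebraMap F K).injective
    (h.trans (map_zero ι).symm)

namespace Unitization

instance {R A : Type*} [Semiring R] [AddCommMonoid A] [Module R A] [Module.Finite R A] :
    Module.Finite R (Unitization R A) :=
  .equiv (linearEquiv R R A).symm

theorem finrank_eq_add_one {R A : Type*} [Ring R] [StrongRankCondition R] [AddCommGroup A]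
    [Module R A] [Module.Free R A] [Module.Finite R A] :
    finrank R (Unitization R A) = finrank R A + 1 := by
  rw [(linearEquiv R R A).finrank_eq, finrank_prod, finrank_self, add_comm]

variable {F A : Type*} [Field F] [NonUnitalRing A] [Module F A] [SMulCommClass F A A]
  [IsScalarTower F A A]

theorem mul_inr_mem_span_isNilpotent (hspan : Submodule.span F {a : A | IsNilpotentNU a} = ⊤)
    (b : Unitization F A) (a : A) :
    b * (a : Unitization F A) ∈ Submodule.span F {x : Unitization F A | IsNilpotent x} := by
  have hba : b * (a : Unitization F A) = ↑(b.fst • a + b.snd * a) := by ext <;> simp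
  rw [hba]
  generalize b.fst • a + b.snd * a = x
  have hx : x ∈ Submodule.span F {a : A | IsNilpotentNU a} := hspan ▸ Submodule.mem_top
  induction hx using Submodule.span_induction with
  | mem x hx =>
    obtain ⟨m, hm⟩ := hx
    refine Submodule.subset_span ⟨m + 1, ?_⟩
    simpa [hm] using (map_nupow (inrNonUnitalAlgHom F A) x m).symm
  | zero => simp
  | add x y _ _ hx hy => simpa using add_mem hx hy
  | smul c x _ hx => simpa using Submodule.smul_mem _ c hx

end Unitization

theorem nupow_eq_foldl {A : Type*} [Mul A] (a : A) (m : ℕ) :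
    nupow a m = (List.replicate m a).foldl (· * ·) a := by
  induction m with
  | zero => rfl
  | succ m ih => rw [nupow, ih, List.replicate_succ', List.foldl_append]; rfl

theorem foldl_mul_eq_zero_of_span_isNilpotentNU {F A : Type*} [Field F] [NonUnitalRing A]
    [Module F A] [SMulCommClass F A A] [IsScalarTower F A A] [FiniteDimensional F A]
    (hspan : Submodule.span F {a : A | IsNilpotentNU a} = ⊤) (x : A) {l : List A}
    (hlen : finrank F A ≤ l.length) : l.foldl (· * ·) x = 0 := by
  let ι := Unitization.inrNonUnitalAlgHom F A
  have hprod : ((x :: l).map ι).prod = 0 := by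
    refine list_prod_eq_zero_of_mul_mem_span_isNilpotent (F := F) ?_ ?_
    · simp only [List.mem_map, forall_exists_index, and_imp]
      rintro _ a - rfl b
      exact Unitization.mul_inr_mem_span_isNilpotent hspan b a
    · simpa [Unitization.finrank_eq_add_one] using hlen
  refine Unitization.inr_injective (R := F) ?_
  rw [← Unitization.inrNonUnitalAlgHom_toFun, map_foldl_mul, hprod, Unitization.inr_zero]

/-- Wedderburn's Theorem: a finite-dimensional (possibly
non-unital) `F`-algebra spanned by its nilpotent elements is nilpotent; more
precisely every product of `n = dim A + 1` elements vanishes, and in particular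
every element is nilpotent. -/
theorem stmt12 {F A : Type*} [Field F] [NonUnitalRing A] [Module F A]
    [SMulCommClass F A A] [IsScalarTower F A A] [FiniteDimensional F A]
    (hspan : Submodule.span F {a : A | IsNilpotentNU a} = ⊤) :
    (∀ a : ℕ → A,
      (List.range (Module.finrank F A)).foldl (fun x i => x * a (i + 1)) (a 0) = 0) ∧
    ∀ a : A, IsNilpotentNU a := by
  refine ⟨fun a => ?_, fun a => ⟨finrank F A, ?_⟩⟩
  · rw [← List.foldl_map (g := (· * ·))]
    exact foldl_mul_eq_zero_of_span_isNilpotentNU hspan _ (by simp)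
  · rw [nupow_eq_foldl]
    exact foldl_mul_eq_zero_of_span_isNilpotentNU hspan _ (by simp)
end

section
/- Let F be a field, n ≥ 1, and A a subalgebra of M_n(F) such that every element of A is a nilpotent matrix, i.e., A is a nilalgebra of matrices. Then A is triangularizable: there is a basis of F^n with respect to which every element of A is strictly upper triangular; consequently A^n = 0. -/
/-!
Under the commutator bracket the elements of `𝒜`, viewed as endomorphisms of `Fⁿ`, form a Lie
algebra of nilpotent operators, so by Engel's theorem `Fⁿ` is a nilpotent Lie module over it.
Descending its lower central series, every proper subspace `W` admits a vector outside `W` that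
`𝒜` maps into `W`. Choosing such vectors greedily yields a basis `b` with
`A bⱼ ∈ span {bᵢ | i < j}` for all `A ∈ 𝒜`: in this basis every element of `𝒜` is strictly upper
triangular, and a product of `n` strictly upper triangular `n × n` matrices vanishes.
-/

open Module Submodule

namespace LieModule

variable {R L M : Type*} [CommRing R] [LieRing L] [LieAlgebra R L] [AddCommGroup M] [Module R M]
  [LieRingModule L M] [LieModule R L M]

theorem exists_notMem_forall_lie_mem [IsNilpotent L M] {W : Submodule R M} (hW : W ≠ ⊤) :
    ∃ x ∉ W, ∀ y : L, ⁅y, x⁆ ∈ W := by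
  classical
  obtain ⟨k, hk⟩ := IsNilpotent.nilpotent (R := R) (L := L) (M := M)
  have hex : ∃ j, (lowerCentralSeries R L M j : Submodule R M) ≤ W := ⟨k, by simp [hk]⟩
  obtain ⟨i, hi⟩ : ∃ i, Nat.find hex = i + 1 :=
    Nat.exists_eq_add_one.mpr <| Nat.pos_of_ne_zero fun h0 ↦ hW <| top_le_iff.mp <| by
      simpa [h0] using Nat.find_spec hex
  have hle := Nat.find_spec hex
  rw [hi, lowerCentralSeries_succ] at hle
  obtain ⟨x, hx, hxW⟩ := SetLike.not_le_iff_exists.mp (Nat.find_min hex (m := i) (by omega))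
  exact ⟨x, hxW, fun y ↦ hle (LieSubmodule.lie_mem_lie (LieSubmodule.mem_top y) hx)⟩

end LieModule

attribute [local instance] LieRing.ofAssociativeRing

def NonUnitalSubalgebra.toLieSubalgebra {R A : Type*} [CommRing R] [Ring A] [Algebra R A]
    (S : NonUnitalSubalgebra R A) : LieSubalgebra R A where
  toSubmodule := S.toSubmodule
  lie_mem' {x y} hx hy := by
    rw [LieRing.of_associative_ring_bracket]
    exact S.toSubmodule.sub_mem (S.mul_mem hx hy) (S.mul_mem hy hx)

theorem NonUnitalSubalgebra.exists_notMem_forall_mem_of_isNilpotent {K V : Type*} [Field K]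
    [AddCommGroup V] [Module K V] [FiniteDimensional K V]
    (S : NonUnitalSubalgebra K (Module.End K V)) (hS : ∀ a ∈ S, IsNilpotent a)
    {W : Submodule K V} (hW : W ≠ ⊤) : ∃ x ∉ W, ∀ a ∈ S, a x ∈ W := by
  have : LieModule.IsNilpotent S.toLieSubalgebra V := by
    rw [LieModule.isNilpotent_iff_forall' (R := K)]
    rintro ⟨a, ha⟩
    exact hS a ha
  obtain ⟨x, hxW, hx⟩ := LieModule.exists_notMem_forall_lie_mem (L := S.toLieSubalgebra) hW
  exact ⟨x, hxW, fun a ha ↦ hx ⟨a, ha⟩⟩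

section Flag

variable {K V : Type*} [Field K] [AddCommGroup V] [Module K V] {S : Set (Module.End K V)}

theorem exists_linearIndependent_forall_apply_mem_span_Iio
    (hS : ∀ W : Submodule K V, W ≠ ⊤ → ∃ x ∉ W, ∀ a ∈ S, a x ∈ W) {m : ℕ}
    (hm : m ≤ finrank K V) :
    ∃ x : Fin m → V, LinearIndependent K x ∧ ∀ j, ∀ a ∈ S, a (x j) ∈ span K (x '' Set.Iio j) := by
  induction m with
  | zero => exact ⟨Fin.elim0, linearIndependent_empty_type, fun j ↦ j.elim0⟩
  | succ m ih =>
    obtain ⟨x, hli, hx⟩ := ih (by omega)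
    have hne : span K (Set.range x) ≠ ⊤ := fun h ↦ by
      have := finrank_span_eq_card hli
      rw [h, finrank_top, Fintype.card_fin] at this
      omega
    obtain ⟨y, hy, hyS⟩ := hS _ hne
    refine ⟨Fin.snoc x y, linearIndependent_finSnoc.mpr ⟨hli, hy⟩, fun j a ha ↦ ?_⟩
    cases j using Fin.lastCases with
    | last =>
      refine span_mono ?_ (by simpa using hyS a ha)
      rintro _ ⟨i, rfl⟩
      exact ⟨i.castSucc, Fin.castSucc_lt_last i, by simp⟩
    | cast j =>
      refine span_mono ?_ (by simpa using hx j a ha)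
      rintro _ ⟨i, hi, rfl⟩
      exact ⟨i.castSucc, Fin.castSucc_lt_castSucc_iff.mpr hi, by simp⟩

theorem exists_basis_forall_apply_mem_span_Iio [FiniteDimensional K V]
    (hS : ∀ W : Submodule K V, W ≠ ⊤ → ∃ x ∉ W, ∀ a ∈ S, a x ∈ W) {n : ℕ}
    (hn : finrank K V = n) :
    ∃ b : Basis (Fin n) K V, ∀ j, ∀ a ∈ S, a (b j) ∈ span K (b '' Set.Iio j) := by
  obtain ⟨x, hli, hx⟩ := exists_linearIndependent_forall_apply_mem_span_Iio hS hn.ge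
  refine ⟨basisOfLinearIndependentOfCardEqFinrank' x hli (by simp [hn]), ?_⟩
  simpa using hx

end Flag

theorem LinearMap.toMatrix_eq_zero_of_apply_mem_span_Iio {K V ι : Type*} [Field K]
    [AddCommGroup V] [Module K V] [Fintype ι] [DecidableEq ι] [LinearOrder ι]
    (b : Basis ι K V) {f : Module.End K V} (hf : ∀ j, f (b j) ∈ span K (b '' Set.Iio j))
    {i j : ι} (hij : j ≤ i) : LinearMap.toMatrix b b f i j = 0 := by
  rw [LinearMap.toMatrix_apply]
  by_contra h
  exact hij.not_gt (b.mem_span_image.mp (hf j) (Finsupp.mem_support_iff.mpr h))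

theorem Matrix.list_prod_apply_eq_zero_of_lt_add_length {R : Type*} [Semiring R] {n : ℕ}
    (l : List (Matrix (Fin n) (Fin n) R)) (hl : ∀ M ∈ l, ∀ i j, j ≤ i → M i j = 0)
    {i j : Fin n} (hij : (j : ℕ) < i + l.length) : l.prod i j = 0 := by
  induction l generalizing i with
  | nil => exact one_apply_ne (by rintro rfl; simp at hij)
  | cons M l ih =>
    rw [List.prod_cons, mul_apply]
    refine Finset.sum_eq_zero fun k _ ↦ ?_
    rcases le_or_gt k i with hk | hk
    · rw [hl M List.mem_cons_self i k hk, zero_mul]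
    · rw [ih (fun M hM ↦ hl M (List.mem_cons_of_mem _ hM)) (by simp at hij; omega), mul_zero]

theorem Matrix.list_prod_eq_zero_of_length_le {R : Type*} [Semiring R] {n : ℕ}
    (l : List (Matrix (Fin n) (Fin n) R)) (hl : ∀ M ∈ l, ∀ i j, j ≤ i → M i j = 0)
    (hlen : n ≤ l.length) : l.prod = 0 :=
  ext fun i j ↦ list_prod_apply_eq_zero_of_lt_add_length l hl (by omega)

theorem Module.Basis.toMatrix_toLin'_eq_inv_mul_mul {K ι : Type*} [Field K] [Fintype ι]
    [DecidableEq ι] (b : Basis ι K (ι → K)) (A : Matrix ι ι K) :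
    LinearMap.toMatrix b b (Matrix.toLin' A) =
      ((Pi.basisFun K ι).toMatrix b)⁻¹ * A * (Pi.basisFun K ι).toMatrix b := by
  rw [Matrix.inv_eq_left_inv (b.toMatrix_mul_toMatrix_flip _),
    ← basis_toMatrix_mul_linearMap_toMatrix_mul_basis_toMatrix b (Pi.basisFun K ι) b
      (Pi.basisFun K ι),
    LinearMap.toMatrix_eq_toMatrix', LinearMap.toMatrix'_toLin']

theorem stmt13_general {F : Type*} [Field F] {n : ℕ}
    (𝒜 : NonUnitalSubalgebra F (Matrix (Fin n) (Fin n) F))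
    (hnil : ∀ A ∈ 𝒜, IsNilpotent A) :
    (∃ P : Matrix (Fin n) (Fin n) F, IsUnit P ∧
      ∀ A ∈ 𝒜, ∀ i j : Fin n, j ≤ i → (P⁻¹ * A * P) i j = 0) ∧
    ∀ f : Fin n → Matrix (Fin n) (Fin n) F, (∀ i, f i ∈ 𝒜) →
      (List.ofFn f).prod = 0 := by
  let 𝒜' := 𝒜.map (Matrix.toLinAlgEquiv' (R := F) (n := Fin n))
  have hnil' : ∀ a ∈ 𝒜', IsNilpotent a := by
    rintro _ ⟨A, hA, rfl⟩
    exact (Matrix.isNilpotent_toLin'_iff A).mpr (hnil A hA)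
  obtain ⟨b, hb⟩ := exists_basis_forall_apply_mem_span_Iio
    (fun W hW ↦ 𝒜'.exists_notMem_forall_mem_of_isNilpotent hnil' hW) (finrank_fin_fun F)
  have htriang : ∀ A ∈ 𝒜, ∀ i j, j ≤ i → LinearMap.toMatrix b b (Matrix.toLin' A) i j = 0 :=
    fun A hA _ _ ↦ LinearMap.toMatrix_eq_zero_of_apply_mem_span_Iio b fun j ↦ hb j _ ⟨A, hA, rfl⟩
  let P := (Pi.basisFun F (Fin n)).toMatrix b
  have : Invertible P := (Pi.basisFun F (Fin n)).invertibleToMatrix b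
  refine ⟨⟨P, isUnit_of_invertible P, fun A hA i j hij ↦ ?_⟩, fun f hf ↦ ?_⟩
  · rw [← b.toMatrix_toLin'_eq_inv_mul_mul]
    exact htriang A hA i j hij
  · let φ := Matrix.toLinAlgEquiv'.trans (LinearMap.toMatrixAlgEquiv b)
    apply φ.injective
    rw [map_list_prod, map_zero, List.map_ofFn]
    refine Matrix.list_prod_eq_zero_of_length_le _ ?_ (by simp)
    simp only [List.mem_ofFn, forall_exists_index]
    rintro _ k rfl
    exact htriang _ (hf k)

/-- a subalgebra of `M_n(F)` all of whose elements are nilpotent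
is simultaneously strictly triangularizable, and any product of `n` of its
elements is zero. -/
theorem stmt13 {F : Type*} [Field F] {n : ℕ} (hn : 1 ≤ n)
    (𝒜 : NonUnitalSubalgebra F (Matrix (Fin n) (Fin n) F))
    (hnil : ∀ A ∈ 𝒜, IsNilpotent A) :
    (∃ P : Matrix (Fin n) (Fin n) F, IsUnit P ∧
      ∀ A ∈ 𝒜, ∀ i j : Fin n, j ≤ i → (P⁻¹ * A * P) i j = 0) ∧
    ∀ f : Fin n → Matrix (Fin n) (Fin n) F, (∀ i, f i ∈ 𝒜) →
      (List.ofFn f).prod = 0 :=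
  stmt13_general 𝒜 hnil
end

section
/- Let F be an algebraically closed field, n ≥ 1, and A a subalgebra of M_n(F) with trace zero for every element (tr(A) = 0 for all A ∈ A). Then A is reducible: either A = {0} or A has a nontrivial invariant subspace of F^n. -/
/-!
If the algebra `𝒜` were irreducible, the orbit of every nonzero vector would be the whole space
(its common kernel and each orbit are invariant subspaces). For a nonzero `T ∈ 𝒜` of minimal
rank, an eigenvalue `μ` of `TS` on `range T` makes `TST - μT ∈ 𝒜` of smaller rank, so it
vanishes; transitivity rules this out unless `T` has rank one. Transitivity then provides
`B ∈ 𝒜` for which `TB` is a rank-one idempotent, whose trace is `1` in any characteristic.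
-/

open Module LinearMap

section

variable {F V : Type*} [Field F] [AddCommGroup V] [Module F V]

namespace Module.End

theorem finrank_range_mul_lt [FiniteDimensional F V] {L T : End F V} {w : V}
    (hw : w ∈ range T) (hw0 : w ≠ 0) (hLw : L w = 0) :
    finrank F (range (L * T)) < finrank F (range T) := by
  rw [End.mul_eq_comp, range_comp]
  by_contra! h
  exact hw0 (Submodule.disjoint_def.mp (Submodule.disjoint_ker_of_finrank_le L h) w hw hLw)

theorem exists_eigenvector_mem_of_mapsTo [IsAlgClosed F] [FiniteDimensional F V]
    {f : End F V} {W : Submodule F V} (hW : W ≠ ⊥) (hf : ∀ x ∈ W, f x ∈ W) :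
    ∃ μ : F, ∃ w ∈ W, w ≠ 0 ∧ f w = μ • w := by
  have : Nontrivial W := Submodule.nontrivial_iff_ne_bot.mpr hW
  obtain ⟨μ, hμ⟩ := Module.End.exists_eigenvalue (f.restrict hf)
  obtain ⟨w, hw⟩ := hμ.exists_hasEigenvector
  exact ⟨μ, w, w.2, by simpa using hw.2, congrArg Subtype.val hw.apply_eq_smul⟩

theorem trace_eq_one_of_range_le_span [FiniteDimensional F V] {E : End F V} {w : V}
    (hw : w ≠ 0) (hE : range E ≤ F ∙ w) (hEw : E w = w) : trace F V E = 1 := by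
  have hidem : IsIdempotentElem E := by
    ext x
    obtain ⟨c, hc⟩ := Submodule.mem_span_singleton.mp (hE (mem_range_self E x))
    simp [← hc, hEw]
  have hrange : range E = F ∙ w :=
    le_antisymm hE ((Submodule.span_singleton_le_iff_mem _ _).mpr ⟨w, hEw⟩)
  rw [hidem.isProj_range.trace, hrange, finrank_span_singleton hw, Nat.cast_one]

end Module.End

namespace NonUnitalSubalgebra

variable (𝒜 : NonUnitalSubalgebra F (End F V))

def orbit (v : V) : Submodule F V := 𝒜.toSubmodule.map (applyₗ v)

theorem mem_orbit {v y : V} : y ∈ 𝒜.orbit v ↔ ∃ A ∈ 𝒜, A v = y := Submodule.mem_map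

theorem apply_mem_orbit {v x : V} {A : End F V} (hA : A ∈ 𝒜) (hx : x ∈ 𝒜.orbit v) :
    A x ∈ 𝒜.orbit v := by
  obtain ⟨B, hB, rfl⟩ := (𝒜.mem_orbit).mp hx
  exact (𝒜.mem_orbit).mpr ⟨A * B, mul_mem hA hB, rfl⟩

def IsIrreducible : Prop :=
  𝒜 ≠ ⊥ ∧ ∀ W : Submodule F V, (∀ A ∈ 𝒜, ∀ x ∈ W, A x ∈ W) → W = ⊥ ∨ W = ⊤

def IsTransitive : Prop := ∀ v : V, v ≠ 0 → 𝒜.orbit v = ⊤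

variable {𝒜}

theorem IsIrreducible.exists_apply_ne_zero (h : 𝒜.IsIrreducible) {v : V} (hv : v ≠ 0) :
    ∃ A ∈ 𝒜, A v ≠ 0 := by
  by_contra! hker
  let K : Submodule F V := ⨅ A ∈ 𝒜, ker A
  have hK : ∀ A ∈ 𝒜, ∀ x ∈ K, A x ∈ K := by
    intro A hA x hx
    simp only [K, Submodule.mem_iInf, mem_ker] at hx ⊢
    exact fun C hC => hx (C * A) (mul_mem hC hA)
  have hvK : v ∈ K := by simpa only [K, Submodule.mem_iInf, mem_ker] using hker
  refine (h.2 K hK).elim (fun hbot => hv ((Submodule.eq_bot_iff K).mp hbot v hvK)) fun htop => ?_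
  refine h.1 (eq_bot_iff.mpr fun A hA => NonUnitalAlgebra.mem_bot.mpr (LinearMap.ext fun x => ?_))
  have hx : x ∈ K := htop ▸ Submodule.mem_top
  simp only [K, Submodule.mem_iInf, mem_ker] at hx
  exact hx A hA

theorem IsIrreducible.isTransitive (h : 𝒜.IsIrreducible) : 𝒜.IsTransitive := by
  intro v hv
  refine (h.2 _ fun A hA x hx => 𝒜.apply_mem_orbit hA hx).resolve_left fun hbot => ?_
  obtain ⟨A, hA, hAv⟩ := h.exists_apply_ne_zero hv
  exact hAv ((Submodule.eq_bot_iff _).mp hbot _ ((𝒜.mem_orbit).mpr ⟨A, hA, rfl⟩))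

theorem IsTransitive.exists_apply_eq (h : 𝒜.IsTransitive) {v : V} (hv : v ≠ 0) (y : V) :
    ∃ A ∈ 𝒜, A v = y :=
  (𝒜.mem_orbit).mp (h v hv ▸ Submodule.mem_top)

theorem IsTransitive.exists_finrank_range_lt [IsAlgClosed F] [FiniteDimensional F V]
    (h : 𝒜.IsTransitive) {T : End F V} (hT : T ∈ 𝒜) (hr : 1 < finrank F (range T)) :
    ∃ M ∈ 𝒜, M ≠ 0 ∧ finrank F (range M) < finrank F (range T) := by
  have hT0 : range T ≠ ⊥ := Submodule.finrank_eq_zero.not.mp (by omega)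
  obtain ⟨_, ⟨u, rfl⟩, hu⟩ := Submodule.exists_mem_ne_zero_of_ne_bot hT0
  have hlt : F ∙ T u < range T := by
    refine lt_of_le_of_ne ((Submodule.span_singleton_le_iff_mem _ _).mpr (mem_range_self T u))
      fun h => ?_
    rw [← h, finrank_span_singleton hu] at hr
    exact hr.false
  obtain ⟨_, ⟨v, rfl⟩, hv⟩ := SetLike.exists_of_lt hlt
  obtain ⟨S, hS, hSu⟩ := h.exists_apply_eq hu v
  obtain ⟨μ, w, hw, hw0, hμ⟩ :=
    End.exists_eigenvector_mem_of_mapsTo (f := T * S) hT0 fun x _ => ⟨S x, rfl⟩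
  -- `T S T u = T v ∉ F ∙ T u`, so `T S T - μ T ≠ 0`
  refine ⟨(T * S - μ • 1) * T, ?_, fun h0 => hv ?_,
    End.finrank_range_mul_lt hw hw0 (by simp [hμ])⟩
  · rw [sub_mul, smul_mul_assoc, one_mul]
    exact sub_mem (mul_mem (mul_mem hT hS) hT) (SMulMemClass.smul_mem μ hT)
  · have := congr($h0 u)
    simp only [End.mul_apply, LinearMap.sub_apply, LinearMap.smul_apply, End.one_apply, hSu,
      LinearMap.zero_apply, sub_eq_zero] at this
    exact this ▸ Submodule.smul_mem _ μ (Submodule.mem_span_singleton_self _)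

theorem IsTransitive.exists_finrank_range_eq_one [IsAlgClosed F] [FiniteDimensional F V]
    (h : 𝒜.IsTransitive) (h𝒜 : 𝒜 ≠ ⊥) : ∃ T ∈ 𝒜, finrank F (range T) = 1 := by
  obtain ⟨T, hT, hT0⟩ : ∃ T ∈ 𝒜, T ≠ 0 := by
    by_contra! h0
    exact h𝒜 (eq_bot_iff.mpr fun A hA => NonUnitalAlgebra.mem_bot.mpr (h0 A hA))
  induction hr : finrank F (range T) using Nat.strong_induction_on generalizing T with
  | _ r ih =>
    rcases lt_trichotomy r 1 with hr0 | rfl | hr1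
    · rw [Nat.lt_one_iff, ← hr, Submodule.finrank_eq_zero, range_eq_bot] at hr0
      exact absurd hr0 hT0
    · exact ⟨T, hT, hr⟩
    · obtain ⟨M, hM, hM0, hlt⟩ := h.exists_finrank_range_lt hT (hr ▸ hr1)
      exact ih _ (hr ▸ hlt) M hM hM0 rfl

theorem IsTransitive.exists_trace_eq_one [FiniteDimensional F V] (h : 𝒜.IsTransitive)
    {T : End F V} (hT : T ∈ 𝒜) (hr : finrank F (range T) = 1) :
    ∃ E ∈ 𝒜, trace F V E = 1 := by
  obtain ⟨_, ⟨u, rfl⟩, hu⟩ :=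
    Submodule.exists_mem_ne_zero_of_ne_bot (p := range T)
      (Submodule.finrank_eq_zero.not.mp (by omega))
  have hspan : range T ≤ F ∙ T u :=
    (Submodule.eq_of_le_of_finrank_le
      ((Submodule.span_singleton_le_iff_mem _ _).mpr (mem_range_self T u))
      (by rw [hr, finrank_span_singleton hu])).ge
  obtain ⟨B, hB, hBu⟩ := h.exists_apply_eq hu u
  exact ⟨T * B, mul_mem hT hB,
    End.trace_eq_one_of_range_le_span hu ((range_comp_le_range B T).trans hspan) (by simp [hBu])⟩

theorem IsIrreducible.exists_trace_eq_one [IsAlgClosed F] [FiniteDimensional F V]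
    (h : 𝒜.IsIrreducible) : ∃ E ∈ 𝒜, trace F V E = 1 :=
  have ⟨_, hT, hr⟩ := h.isTransitive.exists_finrank_range_eq_one h.1
  h.isTransitive.exists_trace_eq_one hT hr

end NonUnitalSubalgebra

end

theorem stmt14_general {F : Type*} [Field F] [IsAlgClosed F] {n : ℕ}
    (𝒜 : NonUnitalSubalgebra F (Matrix (Fin n) (Fin n) F))
    (htr : ∀ A ∈ 𝒜, Matrix.trace A = 0) :
    (∀ A ∈ 𝒜, A = 0) ∨
    ∃ W : Submodule F (Fin n → F), W ≠ ⊥ ∧ W ≠ ⊤ ∧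
      ∀ A ∈ 𝒜, ∀ x ∈ W, A.mulVec x ∈ W := by
  by_contra! h
  obtain ⟨⟨A₀, hA₀, hA₀0⟩, hred⟩ := h
  have hirr : (𝒜.map (Matrix.toLinAlgEquiv' (R := F) (n := Fin n))).IsIrreducible := by
    refine ⟨fun hbot => hA₀0 ?_, fun W hW => ?_⟩
    · have h0 := hbot ▸ NonUnitalSubalgebra.mem_map.mpr ⟨A₀, hA₀, rfl⟩
      exact (map_eq_zero_iff _ Matrix.toLinAlgEquiv'.injective).mp (NonUnitalAlgebra.mem_bot.mp h0)
    · by_contra! hW'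
      obtain ⟨A, hA, x, hx, hAx⟩ := hred W hW'.1 hW'.2
      exact hAx (hW _ (NonUnitalSubalgebra.mem_map.mpr ⟨A, hA, rfl⟩) x hx)
  obtain ⟨_, ⟨A, hA, rfl⟩, htrA⟩ := hirr.exists_trace_eq_one
  change trace F _ (Matrix.toLin' A) = 1 at htrA
  rw [Matrix.trace_toLin'_eq, htr A hA] at htrA
  exact zero_ne_one htrA

/-- over an algebraically closed field, a subalgebra of `M_n(F)`
on which the trace vanishes identically is reducible: it is zero or has a
nontrivial invariant subspace. -/
theorem stmt14 {F : Type*} [Field F] [IsAlgClosed F] {n : ℕ} (hn : 1 ≤ n)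
    (𝒜 : NonUnitalSubalgebra F (Matrix (Fin n) (Fin n) F))
    (htr : ∀ A ∈ 𝒜, Matrix.trace A = 0) :
    (∀ A ∈ 𝒜, A = 0) ∨
    ∃ W : Submodule F (Fin n → F), W ≠ ⊥ ∧ W ≠ ⊤ ∧
      ∀ A ∈ 𝒜, ∀ x ∈ W, A.mulVec x ∈ W :=
  stmt14_general 𝒜 htr
end

section
/- Let F be a field, n ≥ 1, and A a subalgebra of M_n(F) that is spanned as an F-vector space by its nilpotent elements, and such that the characteristic polynomial of every element of A splits into linear factors over F. Then A^n = 0; in particular every element of A is nilpotent. -/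
/-!
A Burnside-type argument. The trace vanishes on the span of the nilpotent elements, and both
hypotheses pass to invariant subspaces and to quotients by them. On a minimal nonzero invariant
subspace the algebra acts by zero: otherwise it acts transitively on nonzero vectors, and an
element `a` of minimal nonzero rank satisfies `a b a ∈ F a` for every `b` (split minimal
polynomials give an eigenvector of `a b` on the range of `a`, and it lowers the rank of
`a b a - μ a`). Transitivity then forces `a` to have rank one, so that a suitable `a b` is a
projection of rank one, whose trace `1` contradicts the vanishing of the trace. Hence there is
a common kernel vector `v`, and induction on the dimension, through `M ⧸ F v`, shows that any
`dim M` elements multiply to zero.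
-/

open Polynomial Module LinearMap

section

variable {F M : Type*} [Field F] [AddCommGroup M] [Module F M]

theorem LinearMap.aeval_restrict_apply {f : End F M} {N : Submodule F M}
    (hf : ∀ x ∈ N, f x ∈ N) (p : F[X]) (x : N) :
    (aeval (f.restrict hf) p x : M) = aeval f p x := by
  induction p using Polynomial.induction_on' with
  | add p q hp hq => simp [hp, hq]
  | monomial k a => simp [End.pow_restrict k hf, restrict_apply]

theorem Submodule.aeval_mapQ_apply {f : End F M} {N : Submodule F M}
    (hf : N ≤ N.comap f) (p : F[X]) (x : M) :
    aeval (N.mapQ N f hf) p (Submodule.Quotient.mk x) = Submodule.Quotient.mk (aeval f p x) := by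
  induction p using Polynomial.induction_on' with
  | add p q hp hq => simp only [map_add, LinearMap.add_apply, hp, hq, Submodule.Quotient.mk_add]
  | monomial k a => simp [← Submodule.mapQ_pow N hf k]

theorem LinearMap.minpoly_restrict_dvd {f : End F M} {N : Submodule F M}
    (hf : ∀ x ∈ N, f x ∈ N) : minpoly F (f.restrict hf) ∣ minpoly F f :=
  minpoly.dvd _ _ <| LinearMap.ext fun x => Subtype.ext <| by simp [aeval_restrict_apply]

theorem Submodule.minpoly_mapQ_dvd {f : End F M} {N : Submodule F M}
    (hf : N ≤ N.comap f) : minpoly F (N.mapQ N f hf) ∣ minpoly F f :=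
  minpoly.dvd _ _ <| N.linearMap_qext <| LinearMap.ext fun x => by simp [aeval_mapQ_apply]

theorem Module.End.exists_eigenvector_mem_of_splits [FiniteDimensional F M] {f : End F M}
    (hf : (minpoly F f).Splits) {N : Submodule F M} (hN : ∀ x ∈ N, f x ∈ N) (hN0 : N ≠ ⊥) :
    ∃ μ : F, ∃ w ∈ N, w ≠ 0 ∧ f w = μ • w := by
  have : Nontrivial N := Submodule.nontrivial_iff_ne_bot.mpr hN0
  have hint := Algebra.IsIntegral.isIntegral (R := F) (f.restrict hN)
  obtain ⟨μ, hμ⟩ := (hf.of_dvd (minpoly.ne_zero (Algebra.IsIntegral.isIntegral f))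
    (minpoly_restrict_dvd hN)).exists_eval_eq_zero (minpoly.degree_pos hint).ne'
  obtain ⟨w, hw⟩ := (hasEigenvalue_of_isRoot hμ).exists_hasEigenvector
  exact ⟨μ, w, w.2, by simpa using hw.2, congrArg Subtype.val hw.apply_eq_smul⟩

theorem LinearMap.finrank_range_comp_lt {N P : Type*} [AddCommGroup N] [Module F N]
    [AddCommGroup P] [Module F P] [FiniteDimensional F M] {f : M →ₗ[F] N} {h : N →ₗ[F] P}
    {w : N} (hw : w ∈ range f) (hw0 : w ≠ 0) (hhw : h w = 0) :
    finrank F (range (h ∘ₗ f)) < finrank F (range f) := by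
  have hker : 0 < finrank F (ker (h.domRestrict (range f))) :=
    finrank_pos_iff_exists_ne_zero.mpr ⟨⟨⟨w, hw⟩, by simpa using hhw⟩, by simpa using hw0⟩
  have := (h.domRestrict (range f)).finrank_range_add_finrank_ker
  rw [range_domRestrict, ← range_comp] at this
  omega

variable {R : Type*} [NonUnitalNonAssocRing R] [Module F R]

namespace NonUnitalAlgHom

variable (ρ : R →ₙₐ[F] End F M) (N : Submodule F M) (hN : ∀ r, ∀ x ∈ N, ρ r x ∈ N)

def subrep : R →ₙₐ[F] End F N where
  toFun r := (ρ r).restrict (hN r)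
  map_smul' c r := by ext; simp [restrict_apply]
  map_zero' := by ext; simp [restrict_apply]
  map_add' r s := by ext; simp [restrict_apply]
  map_mul' r s := by ext; simp [restrict_apply]

def quotRep : R →ₙₐ[F] End F (M ⧸ N) where
  toFun r := N.mapQ N (ρ r) (hN r)
  map_smul' c r := by ext; simp
  map_zero' := by ext; simp
  map_add' r s := by ext; simp
  map_mul' r s := by ext; simp

@[simp]
theorem subrep_apply_coe (r : R) (x : N) : (ρ.subrep N hN r x : M) = ρ r x := rfl

@[simp]
theorem quotRep_apply_mk (r : R) (x : M) :
    ρ.quotRep N hN r (Submodule.Quotient.mk x) = Submodule.Quotient.mk (ρ r x) := rfl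

theorem list_prod_map_quotRep_apply_mk (l : List R) (x : M) :
    (l.map (ρ.quotRep N hN)).prod (Submodule.Quotient.mk x) =
      Submodule.Quotient.mk ((l.map ρ).prod x) := by
  induction l with
  | nil => rfl
  | cons a l ih => simp [ih]

theorem mapsTo_iInf_ker (r : R) : ∀ x ∈ ⨅ s, ker (ρ s), ρ r x ∈ ⨅ s, ker (ρ s) := by
  simp only [Submodule.mem_iInf, mem_ker]
  intro x hx s
  rw [← End.mul_apply, ← map_mul, hx]

end NonUnitalAlgHom

/-- Phrased for a representation of a fixed `R` rather than for a subalgebra of `End F M`, so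
that it passes to subrepresentations and quotient representations without transport. -/
structure IsNilSpannedSplit (ρ : R →ₙₐ[F] End F M) : Prop where
  mem_span_isNilpotent (r : R) : r ∈ Submodule.span F {r | IsNilpotent (ρ r)}
  splits (r : R) : (minpoly F (ρ r)).Splits

namespace IsNilSpannedSplit

variable {ρ : R →ₙₐ[F] End F M}

theorem trace_eq_zero (hρ : IsNilSpannedSplit ρ) (r : R) : trace F M (ρ r) = 0 := by
  have : Submodule.span F {r | IsNilpotent (ρ r)} ≤ ker (trace F M ∘ₗ (ρ : R →ₗ[F] End F M)) :=
    Submodule.span_le.mpr fun r hr => (isNilpotent_trace_of_isNilpotent hr).eq_zero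
  exact this (hρ.mem_span_isNilpotent r)

theorem subrep [FiniteDimensional F M] (hρ : IsNilSpannedSplit ρ) {N : Submodule F M}
    (hN : ∀ r, ∀ x ∈ N, ρ r x ∈ N) : IsNilSpannedSplit (ρ.subrep N hN) where
  mem_span_isNilpotent r := Submodule.span_mono
    (fun r hr => End.isNilpotent.restrict (hN r) hr) (hρ.mem_span_isNilpotent r)
  splits r := (hρ.splits r).of_dvd (minpoly.ne_zero (Algebra.IsIntegral.isIntegral _))
    (minpoly_restrict_dvd (hN r))

theorem quotRep [FiniteDimensional F M] (hρ : IsNilSpannedSplit ρ) {N : Submodule F M}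
    (hN : ∀ r, ∀ x ∈ N, ρ r x ∈ N) : IsNilSpannedSplit (ρ.quotRep N hN) where
  mem_span_isNilpotent r := Submodule.span_mono
    (fun r hr => End.IsNilpotent.mapQ (hN r) hr) (hρ.mem_span_isNilpotent r)
  splits r := (hρ.splits r).of_dvd (minpoly.ne_zero (Algebra.IsIntegral.isIntegral _))
    (Submodule.minpoly_mapQ_dvd (hN r))

theorem exists_mul_mul_eq_smul [FiniteDimensional F M] (hρ : IsNilSpannedSplit ρ) {a : R}
    (ha : ρ a ≠ 0) (hmin : ∀ r, ρ r ≠ 0 → ¬ finrank F (range (ρ r)) < finrank F (range (ρ a)))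
    (b : R) : ∃ μ : F, ρ (a * b * a) = μ • ρ a := by
  have hinv : ∀ x ∈ range (ρ a), ρ (a * b) x ∈ range (ρ a) := by
    rintro _ ⟨x, rfl⟩
    exact ⟨ρ b (ρ a x), by simp⟩
  obtain ⟨μ, w, hw, hw0, hμ⟩ :=
    End.exists_eigenvector_mem_of_splits (hρ.splits _) hinv (range_eq_bot.not.mpr ha)
  refine ⟨μ, sub_eq_zero.mp ?_⟩
  have hfactor : ρ (a * b * a) - μ • ρ a = (ρ (a * b) - μ • 1) ∘ₗ ρ a := by
    ext x
    simp
  by_contra hne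
  rw [← map_smul, ← map_sub] at hne
  refine hmin _ hne ?_
  rw [map_sub, map_smul, hfactor]
  exact finrank_range_comp_lt hw hw0 (by rw [LinearMap.sub_apply, hμ]; simp)

theorem range_le_span_singleton (htrans : ∀ v : M, v ≠ 0 → ∀ x, ∃ r, ρ r v = x) {a : R}
    (hkey : ∀ b, ∃ μ : F, ρ (a * b * a) = μ • ρ a) {u : M} (hu : ρ a u ≠ 0) :
    range (ρ a) ≤ Submodule.span F {ρ a u} := by
  rintro _ ⟨x, rfl⟩
  obtain ⟨b, hb⟩ := htrans _ hu x
  obtain ⟨μ, hμ⟩ := hkey b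
  have := congr($hμ u)
  simp only [map_mul, End.mul_apply, hb, LinearMap.smul_apply] at this
  rw [this]
  exact Submodule.smul_mem _ _ (Submodule.mem_span_singleton_self _)

theorem exists_apply_eq_of_irreducible
    (hirr : ∀ N : Submodule F M, (∀ r, ∀ x ∈ N, ρ r x ∈ N) → N = ⊥ ∨ N = ⊤)
    (hker : ⨅ r, ker (ρ r) = ⊥) {v : M} (hv : v ≠ 0) (x : M) : ∃ r, ρ r v = x := by
  set orbit := range (applyₗ v ∘ₗ (ρ : R →ₗ[F] End F M))
  suffices h : orbit = ⊤ by
    have : x ∈ orbit := h ▸ Submodule.mem_top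
    simpa [orbit] using this
  refine (hirr orbit ?_).resolve_left fun h => hv ?_
  · rintro r _ ⟨s, rfl⟩
    exact ⟨r * s, by simp⟩
  · have hv' : v ∈ ⨅ r, ker (ρ r) := Submodule.mem_iInf _ |>.mpr fun r =>
      (h ▸ mem_range_self _ r : ρ r v ∈ (⊥ : Submodule F M))
    simpa [hker] using hv'

theorem eq_zero_of_irreducible [FiniteDimensional F M] (hρ : IsNilSpannedSplit ρ)
    (hirr : ∀ N : Submodule F M, (∀ r, ∀ x ∈ N, ρ r x ∈ N) → N = ⊥ ∨ N = ⊤) (r : R) :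
    ρ r = 0 := by
  rcases hirr _ ρ.mapsTo_iInf_ker with hker | hker
  swap
  · ext x
    exact Submodule.mem_iInf _ |>.mp (hker ▸ Submodule.mem_top) r
  by_contra hr
  obtain ⟨a, ha, hmin⟩ := (InvImage.wf (fun r => finrank F (range (ρ r))) wellFounded_lt).has_min
    {r | ρ r ≠ 0} ⟨r, hr⟩
  obtain ⟨u, hu⟩ : ∃ u, ρ a u ≠ 0 := by
    by_contra! h
    exact ha (LinearMap.ext h)
  have htrans : ∀ v : M, v ≠ 0 → ∀ x, ∃ r, ρ r v = x := fun _ =>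
    exists_apply_eq_of_irreducible hirr hker
  obtain ⟨b, hb⟩ := htrans _ hu u
  have hrange := range_le_span_singleton htrans (exists_mul_mul_eq_smul hρ ha hmin) hu
  have hproj : IsProj (Submodule.span F {ρ a u}) (ρ (a * b)) := by
    refine ⟨fun x => hrange ⟨ρ b x, by simp⟩, fun x hx => ?_⟩
    obtain ⟨c, rfl⟩ := Submodule.mem_span_singleton.mp hx
    simp [hb]
  have := hproj.trace
  rw [hρ.trace_eq_zero, finrank_span_singleton hu] at this
  exact zero_ne_one (by exact_mod_cast this)

theorem exists_ne_zero_forall_apply_eq_zero [FiniteDimensional F M] [Nontrivial M]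
    (hρ : IsNilSpannedSplit ρ) : ∃ v : M, v ≠ 0 ∧ ∀ r, ρ r v = 0 := by
  obtain ⟨N, ⟨hN0, hN⟩, hmin⟩ := wellFounded_lt.has_min
    {N : Submodule F M | N ≠ ⊥ ∧ ∀ r, ∀ x ∈ N, ρ r x ∈ N} ⟨⊤, top_ne_bot, by simp⟩
  have hirr : ∀ P : Submodule F N, (∀ r, ∀ x ∈ P, ρ.subrep N hN r x ∈ P) → P = ⊥ ∨ P = ⊤ := by
    intro P hP
    refine or_iff_not_imp_left.mpr fun hP0 =>
      Submodule.map_injective_of_injective N.injective_subtype ?_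
    rw [Submodule.map_subtype_top]
    refine (Submodule.map_subtype_le N P).lt_or_eq.resolve_left (hmin _ ⟨?_, ?_⟩)
    · exact fun h => hP0 <| Submodule.map_injective_of_injective N.injective_subtype <|
        h.trans (Submodule.map_bot _).symm
    · rintro r _ ⟨x, hx, rfl⟩
      exact ⟨_, hP r x hx, rfl⟩
  obtain ⟨v, hv, hv0⟩ := Submodule.exists_mem_ne_zero_of_ne_bot hN0
  refine ⟨v, hv0, fun r => ?_⟩
  have := congr($((hρ.subrep hN).eq_zero_of_irreducible hirr r) ⟨v, hv⟩)
  simpa using congrArg Subtype.val this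

theorem prod_map_eq_zero [FiniteDimensional F M] (hρ : IsNilSpannedSplit ρ) (l : List R)
    (hl : finrank F M ≤ l.length) : (l.map ρ).prod = 0 := by
  induction hd : finrank F M using Nat.strong_induction_on generalizing M l with
  | _ d ih =>
  rcases subsingleton_or_nontrivial M with hM | hM
  · exact Subsingleton.elim _ _
  obtain ⟨v, hv0, hv⟩ := hρ.exists_ne_zero_forall_apply_eq_zero
  have hK : ∀ r, ∀ x ∈ Submodule.span F {v}, ρ r x = 0 := by
    intro r x hx
    obtain ⟨c, rfl⟩ := Submodule.mem_span_singleton.mp hx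
    simp [hv]
  obtain ⟨a, t, rfl⟩ := l.exists_cons_of_length_pos
    (by have := finrank_pos (R := F) (M := M); omega)
  have hquot := (Submodule.span F {v}).finrank_quotient_add_finrank
  rw [finrank_span_singleton hv0] at hquot
  have ht := ih _ (by omega) (hρ.quotRep fun r x hx => (hK r x hx).symm ▸ Submodule.zero_mem _)
    t (by simp at hl; omega) rfl
  ext x
  have hx := congr($ht (Submodule.Quotient.mk x))
  rw [NonUnitalAlgHom.list_prod_map_quotRep_apply_mk, LinearMap.zero_apply,
    Submodule.Quotient.mk_eq_zero] at hx
  simp [hK a _ hx]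

end IsNilSpannedSplit

theorem NonUnitalSubalgebra.isNilSpannedSplit_comp_subtype {A : Type*} [Ring A] [Algebra F A]
    (e : A ≃ₐ[F] End F M) (S : NonUnitalSubalgebra F A)
    (hspan : ∀ a ∈ S, a ∈ Submodule.span F {b | b ∈ S ∧ IsNilpotent b})
    (hsplit : ∀ a ∈ S, (minpoly F a).Splits) :
    IsNilSpannedSplit ((e : A →ₐ[F] End F M).toNonUnitalAlgHom.comp
      (NonUnitalSubalgebraClass.subtype S)) where
  mem_span_isNilpotent r := by
    have hr : r ∈ (Submodule.span F {b | b ∈ S ∧ IsNilpotent b}).comap S.toSubmodule.subtype :=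
      hspan r r.2
    rw [← Submodule.span_preimage_eq (s := {b | b ∈ S ∧ IsNilpotent b})
      ⟨0, S.zero_mem, .zero⟩ fun b hb => ⟨⟨b, hb.1⟩, rfl⟩] at hr
    exact Submodule.span_mono (fun (r : S) hr =>
      show IsNilpotent (e r) from (hr : (r : A) ∈ S ∧ IsNilpotent (r : A)).2.map e) hr
  splits r := show (minpoly F (e r)).Splits by
    rw [minpoly.algEquiv_eq]
    exact hsplit r r.2

end

theorem stmt15_general {F : Type*} [Field F] {n : ℕ}
    (𝒜 : NonUnitalSubalgebra F (Matrix (Fin n) (Fin n) F))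
    (hspan : ∀ A ∈ 𝒜,
      A ∈ Submodule.span F {B : Matrix (Fin n) (Fin n) F | B ∈ 𝒜 ∧ IsNilpotent B})
    (hsplit : ∀ A ∈ 𝒜, (Matrix.charpoly A).Splits) :
    (∀ f : Fin n → Matrix (Fin n) (Fin n) F, (∀ i, f i ∈ 𝒜) →
      (List.ofFn f).prod = 0) ∧
    ∀ A ∈ 𝒜, IsNilpotent A := by
  have hρ := 𝒜.isNilSpannedSplit_comp_subtype Matrix.toLinAlgEquiv' hspan fun A hA =>
    (hsplit A hA).of_dvd (Matrix.charpoly_monic A).ne_zero (Matrix.minpoly_dvd_charpoly A)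
  have hprod (f : Fin n → Matrix (Fin n) (Fin n) F) (hf : ∀ i, f i ∈ 𝒜) :
      (List.ofFn f).prod = 0 := by
    have := hρ.prod_map_eq_zero (List.ofFn fun i => ⟨f i, hf i⟩) (by simp)
    rw [List.map_ofFn] at this
    apply Matrix.toLinAlgEquiv'.injective
    rw [map_list_prod, List.map_ofFn, map_zero]
    exact this
  refine ⟨hprod, fun A hA => ⟨n, ?_⟩⟩
  simpa [List.ofFn_const, List.prod_replicate] using hprod (fun _ => A) (fun _ => hA)

/-- a subalgebra of `M_n(F)` spanned by its nilpotent elements,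
all of whose elements have characteristic polynomial splitting over `F`,
satisfies `𝒜^n = 0`; in particular every element is nilpotent. -/
theorem stmt15 {F : Type*} [Field F] {n : ℕ} (hn : 1 ≤ n)
    (𝒜 : NonUnitalSubalgebra F (Matrix (Fin n) (Fin n) F))
    (hspan : ∀ A ∈ 𝒜,
      A ∈ Submodule.span F {B : Matrix (Fin n) (Fin n) F | B ∈ 𝒜 ∧ IsNilpotent B})
    (hsplit : ∀ A ∈ 𝒜, (Matrix.charpoly A).Splits) :
    (∀ f : Fin n → Matrix (Fin n) (Fin n) F, (∀ i, f i ∈ 𝒜) →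
      (List.ofFn f).prod = 0) ∧
    ∀ A ∈ 𝒜, IsNilpotent A :=
  stmt15_general 𝒜 hspan hsplit
end

section
/- Let F be a field, n ≥ 1, S ⊆ M_n(F) an irreducible semigroup, and J a nonzero semigroup ideal of S. Then J is irreducible: J has no nontrivial common invariant subspace of F^n. -/
/-- a nonzero semigroup ideal `𝒥` of an irreducible semigroup
`𝒮 ⊆ M_n(F)` is itself irreducible: it has no nontrivial common invariant
subspace of `F^n`. -/
theorem stmt18 {F : Type*} [Field F] {n : ℕ} (hn : 1 ≤ n)
    (𝒮 : Set (Matrix (Fin n) (Fin n) F))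
    (hsemi : ∀ a ∈ 𝒮, ∀ b ∈ 𝒮, a * b ∈ 𝒮)
    (hSne : ∃ S ∈ 𝒮, S ≠ 0)
    (hirr : ∀ W : Submodule F (Fin n → F),
      (∀ S ∈ 𝒮, ∀ x ∈ W, S.mulVec x ∈ W) → W = ⊥ ∨ W = ⊤)
    (𝒥 : Set (Matrix (Fin n) (Fin n) F)) (hJS : 𝒥 ⊆ 𝒮)
    (hideal : ∀ S ∈ 𝒮, ∀ J ∈ 𝒥, S * J ∈ 𝒥 ∧ J * S ∈ 𝒥)
    (hJne : ∃ J ∈ 𝒥, J ≠ 0) :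
    ∀ W : Submodule F (Fin n → F),
      (∀ J ∈ 𝒥, ∀ x ∈ W, J.mulVec x ∈ W) → W = ⊥ ∨ W = ⊤ := by
  intro W hW
  by_cases hWbot : W = ⊥
  · exact Or.inl hWbot
  right
  -- the common kernel of 𝒥
  let K : Submodule F (Fin n → F) :=
    { carrier := {x | ∀ J ∈ 𝒥, J.mulVec x = 0}
      add_mem' := by
        intro a b ha hb J hJ
        simp [Matrix.mulVec_add, ha J hJ, hb J hJ]
      zero_mem' := by intro J hJ; simp
      smul_mem' := by
        intro c a ha J hJ
        simp [Matrix.mulVec_smul, ha J hJ] }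
  have hKbot : K = ⊥ := by
    rcases hirr K (by
      intro S hS x hx J hJ
      have h1 : J * S ∈ 𝒥 := (hideal S hS J hJ).2
      have := hx (J * S) h1
      rw [Matrix.mulVec_mulVec]; exact this) with h | h
    · exact h
    · exfalso
      obtain ⟨J, hJ, hJ0⟩ := hJne
      apply hJ0
      have hall : ∀ x, J.mulVec x = 0 := by
        intro x
        have hx : x ∈ K := h ▸ Submodule.mem_top
        exact hx J hJ
      ext i j
      have := congrFun (hall (Pi.single j 1)) i
      simpa [Matrix.mulVec_single] using this
  -- span of 𝒥 W
  let U : Submodule F (Fin n → F) :=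
    Submodule.span F {y | ∃ J ∈ 𝒥, ∃ x ∈ W, y = J.mulVec x}
  have hUW : U ≤ W := by
    apply Submodule.span_le.2
    rintro y ⟨J, hJ, x, hx, rfl⟩
    exact hW J hJ x hx
  have hUinv : ∀ S ∈ 𝒮, ∀ x ∈ U, S.mulVec x ∈ U := by
    intro S hS x hx
    refine Submodule.span_induction ?_ ?_ ?_ ?_ hx
    · rintro y ⟨J, hJ, w, hw, rfl⟩
      rw [Matrix.mulVec_mulVec]
      exact Submodule.subset_span ⟨S * J, (hideal S hS J hJ).1, w, hw, rfl⟩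
    · simp [Matrix.mulVec_zero, Submodule.zero_mem]
    · intro a b _ _ ha hb
      rw [Matrix.mulVec_add]
      exact Submodule.add_mem _ ha hb
    · intro c a _ ha
      rw [Matrix.mulVec_smul]
      exact Submodule.smul_mem _ c ha
  have hUbot : U ≠ ⊥ := by
    intro hU
    apply hWbot
    rw [eq_bot_iff]
    intro x hx
    rw [Submodule.mem_bot]
    have hxK : x ∈ K := by
      intro J hJ
      have : (J.mulVec x : Fin n → F) ∈ U := Submodule.subset_span ⟨J, hJ, x, hx, rfl⟩
      rw [hU, Submodule.mem_bot] at this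
      exact this
    have : x ∈ (⊥ : Submodule F (Fin n → F)) := hKbot ▸ hxK
    exact Submodule.mem_bot F |>.1 this
  have hUtop : U = ⊤ := (hirr U hUinv).resolve_left hUbot
  exact top_le_iff.1 (hUtop ▸ hUW)
end
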